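/- arXiv:1003.5326 — 2 statements merged into one kernel-verified Lean document; each statement's English description precedes it below -/
import Mathlib

section
/- For capacitated valuations with two agents, two goods, and capacities (possibly privately reported) in {0, 1, 2}, the VCG mechanism with h_1(w_2, c_2) = max(w_2 1, w_2 2) if c_2 ≥ 1 and 0 if c_2 = 0, and symmetrically h_2(w_1, c_1), is envy-free and incentive compatible. Precisely: fix any function Opt selecting, for each reported profile ((w_1, c_1), (w_2, c_2)) of nonnegative value vectors w_i ∈ ℝ² and capacities c_i ∈ {0, 1, 2}, a pair of disjoint bundles maximizing the sum of the reported capacitated valuations, with payments p_1 = h_1(w_2, c_2) − v̂_2(Opt_2) and p_2 = h_2(w_1, c_1) − v̂_1(Opt_1), where v̂_i is the capacitated valuation induced by the report (w_i, c_i). Then (EF) at every truthful profile, each agent's true capacitated value of her bundle minus her payment is at least her true capacitated value of the other agent's bundle minus the other agent's payment; and (IC) for every agent with true type (w_i, c_i), every report (w_i', c_i') of the other agent, and every misreport (w_i'', c_i'') by agent i, agent i's utility (true capacitated value of received bundle minus payment) under truthful reporting is at least her utility when reporting (w_i'', c_i''). -/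
/-- The capacitated valuation induced by per-item values `w` and capacity `c`:
the maximum, over subsets `T ⊆ S` with `|T| ≤ c`, of `∑ j ∈ T, w j`. -/
noncomputable def capVal {G : Type*} [DecidableEq G] (w : G → ℝ) (c : ℕ)
    (S : Finset G) : ℝ :=
  (S.powerset.filter fun T => T.card ≤ c).sup' ⟨∅, by simp⟩ (fun T => ∑ j ∈ T, w j)

lemma finset2_cases (S : Finset (Fin 2)) :
    S = ∅ ∨ S = {0} ∨ S = {1} ∨ S = ({0,1} : Finset (Fin 2)) := by
  revert S; decide

lemma le_capVal (w : Fin 2 → ℝ) (c : ℕ) (S T : Finset (Fin 2)) (hTS : T ⊆ S)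
    (hTc : T.card ≤ c) : ∑ j ∈ T, w j ≤ capVal w c S := by
  unfold capVal
  exact Finset.le_sup' (fun T => ∑ j ∈ T, w j) (Finset.mem_filter.mpr ⟨Finset.mem_powerset.mpr hTS, hTc⟩)

lemma capVal_le (w : Fin 2 → ℝ) (c : ℕ) (S : Finset (Fin 2)) (x : ℝ)
    (h : ∀ T ⊆ S, T.card ≤ c → ∑ j ∈ T, w j ≤ x) : capVal w c S ≤ x := by
  unfold capVal
  apply Finset.sup'_le
  intro T hT
  simp only [Finset.mem_filter, Finset.mem_powerset] at hT
  exact h T hT.1 hT.2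

lemma capVal_zero_cap (w : Fin 2 → ℝ) (S : Finset (Fin 2)) : capVal w 0 S = 0 := by
  apply le_antisymm
  · apply capVal_le
    intro T _ hTc
    rw [Finset.card_eq_zero.mp (Nat.le_zero.mp hTc)]
    simp
  · simpa using le_capVal w 0 S ∅ (by simp) (by simp)

lemma capVal_empty (w : Fin 2 → ℝ) (c : ℕ) : capVal w c ∅ = 0 := by
  apply le_antisymm
  · apply capVal_le
    intro T hT _
    rw [Finset.subset_empty.mp hT]
    simp
  · simpa using le_capVal w c ∅ ∅ (by simp) (by simp)

lemma capVal_singleton (w : Fin 2 → ℝ) (c : ℕ) (j : Fin 2) (hc : c ≠ 0) (hw : 0 ≤ w j) :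
    capVal w c {j} = w j := by
  apply le_antisymm
  · apply capVal_le
    intro T hT _
    rcases Finset.subset_singleton_iff.mp hT with h | h <;> simp [h, hw]
  · simpa using le_capVal w c {j} {j} (by simp) (by simpa using Nat.one_le_iff_ne_zero.mpr hc)

lemma capVal_one_pair (w : Fin 2 → ℝ) (hw : ∀ j, 0 ≤ w j) :
    capVal w 1 ({0,1} : Finset (Fin 2)) = max (w 0) (w 1) := by
  apply le_antisymm
  · apply capVal_le
    intro T _ hTc
    rcases finset2_cases T with h | h | h | h <;> subst h <;>
      (try simp only [Finset.sum_empty, Finset.sum_singleton]) <;>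
      (first
        | exact le_max_of_le_left (hw 0)
        | exact le_max_left _ _
        | exact le_max_right _ _
        | exact absurd hTc (by decide))
  · rcases le_total (w 0) (w 1) with h | h
    · rw [max_eq_right h]
      simpa using le_capVal w 1 {0,1} {1} (by simp) (by simp)
    · rw [max_eq_left h]
      simpa using le_capVal w 1 {0,1} {0} (by simp) (by simp)

lemma capVal_two_pair (w : Fin 2 → ℝ) (hw : ∀ j, 0 ≤ w j) :
    capVal w 2 ({0,1} : Finset (Fin 2)) = w 0 + w 1 := by
  have hs : ∑ j ∈ ({0,1} : Finset (Fin 2)), w j = w 0 + w 1 :=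
    Finset.sum_pair (by decide)
  apply le_antisymm
  · apply capVal_le
    intro T _ _
    rcases finset2_cases T with h | h | h | h <;> subst h <;>
      simp [hs]
    · exact add_nonneg (hw 0) (hw 1)
    · linarith [hw 1]
    · linarith [hw 0]
  · simpa [hs] using le_capVal w 2 {0,1} {0,1} (by simp) (by simp)


/-- A type (report) of an agent over two goods: nonnegative per-item values and
a capacity in `{0, 1, 2}`. -/
def GoodType (r : (Fin 2 → ℝ) × ℕ) : Prop :=
  (∀ j, 0 ≤ r.1 j) ∧ r.2 ≤ 2

/-- The pivot term: `max(w 0, w 1)` of the other agent if her capacity is at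
least 1, and `0` if her capacity is `0`. -/
noncomputable def hPivot (r : (Fin 2 → ℝ) × ℕ) : ℝ :=
  if r.2 = 0 then 0 else max (r.1 0) (r.1 1)

lemma hPivot_zero (w : Fin 2 → ℝ) : hPivot (w, 0) = 0 := by simp [hPivot]

lemma hPivot_ne (w : Fin 2 → ℝ) (c : ℕ) (hc : c ≠ 0) :
    hPivot (w, c) = max (w 0) (w 1) := by simp [hPivot, hc]

set_option maxHeartbeats 2000000 in
lemma key (t₁ t₂ : (Fin 2 → ℝ) × ℕ) (h1 : GoodType t₁) (h2 : GoodType t₂)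
    (O₁ O₂ : Finset (Fin 2)) (hd : Disjoint O₁ O₂)
    (hopt : ∀ S₁ S₂ : Finset (Fin 2), Disjoint S₁ S₂ →
      capVal t₁.1 t₁.2 S₁ + capVal t₂.1 t₂.2 S₂ ≤
        capVal t₁.1 t₁.2 O₁ + capVal t₂.1 t₂.2 O₂) :
    capVal t₁.1 t₁.2 O₂ + hPivot t₂ ≤ capVal t₂.1 t₂.2 O₂ + hPivot t₁ := by
  obtain ⟨w₁, c₁⟩ := t₁
  obtain ⟨w₂, c₂⟩ := t₂
  obtain ⟨hw₁, hc₁⟩ := h1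
  obtain ⟨hw₂, hc₂⟩ := h2
  simp only at hopt hw₁ hw₂ hc₁ hc₂ ⊢
  have I0 := hopt ∅ ∅ (by simp)
  have I1 := hopt {0} ∅ (by simp)
  have I2 := hopt {1} ∅ (by simp)
  have I3 := hopt {0,1} ∅ (by simp)
  have I4 := hopt ∅ {0} (by simp)
  have I5 := hopt ∅ {1} (by simp)
  have I6 := hopt ∅ {0,1} (by simp)
  have I7 := hopt {0} {1} (by simp [Finset.disjoint_singleton])
  have I8 := hopt {1} {0} (by simp [Finset.disjoint_singleton])
  clear hopt
  have A10 := capVal_singleton w₁ 1 0 (by decide) (hw₁ 0)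
  have A11 := capVal_singleton w₁ 1 1 (by decide) (hw₁ 1)
  have A20 := capVal_singleton w₁ 2 0 (by decide) (hw₁ 0)
  have A21 := capVal_singleton w₁ 2 1 (by decide) (hw₁ 1)
  have B10 := capVal_singleton w₂ 1 0 (by decide) (hw₂ 0)
  have B11 := capVal_singleton w₂ 1 1 (by decide) (hw₂ 1)
  have B20 := capVal_singleton w₂ 2 0 (by decide) (hw₂ 0)
  have B21 := capVal_singleton w₂ 2 1 (by decide) (hw₂ 1)
  have HA1 := hPivot_ne w₁ 1 (by decide)
  have HA2 := hPivot_ne w₁ 2 (by decide)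
  have HB1 := hPivot_ne w₂ 1 (by decide)
  have HB2 := hPivot_ne w₂ 2 (by decide)
  have AP1 := capVal_one_pair w₁ hw₁
  have AP2 := capVal_two_pair w₁ hw₁
  have BP1 := capVal_one_pair w₂ hw₂
  have BP2 := capVal_two_pair w₂ hw₂
  rcases le_total (w₁ 0) (w₁ 1) with a | a <;> rcases le_total (w₂ 0) (w₂ 1) with b | b <;>
  rcases finset2_cases O₁ with h | h | h | h <;>
  rcases finset2_cases O₂ with h' | h' | h' | h' <;>
  subst h <;> subst h' <;>
  first
  | (exfalso; revert hd; decide)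
  | (interval_cases c₁ <;> interval_cases c₂ <;>
     simp only [hPivot_zero, HA1, HA2, HB1, HB2, capVal_zero_cap, capVal_empty, A10, A11, A20, A21,
       B10, B11, B20, B21, AP1, AP2, BP1, BP2, max_eq_right, max_eq_left, a, b] at I0 I1 I2 I3 I4 I5 I6 I7 I8 ⊢ <;>
     linarith [hw₁ 0, hw₁ 1, hw₂ 0, hw₂ 1])

/-- For capacitated valuations with two agents, two goods, and (possibly
privately reported) capacities in `{0,1,2}`, the VCG mechanism with pivot terms
`hPivot` is envy-free at truthful profiles and incentive compatible. -/
theorem two_two_private_capacities_EF_IC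
    (Opt : (Fin 2 → ℝ) × ℕ → (Fin 2 → ℝ) × ℕ → Finset (Fin 2) × Finset (Fin 2))
    (hOpt : ∀ r₁ r₂, GoodType r₁ → GoodType r₂ →
      Disjoint (Opt r₁ r₂).1 (Opt r₁ r₂).2 ∧
      ∀ S₁ S₂ : Finset (Fin 2), Disjoint S₁ S₂ →
        capVal r₁.1 r₁.2 S₁ + capVal r₂.1 r₂.2 S₂ ≤
          capVal r₁.1 r₁.2 (Opt r₁ r₂).1 + capVal r₂.1 r₂.2 (Opt r₁ r₂).2) :
    -- (EF) at every truthful profile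
    (∀ t₁ t₂, GoodType t₁ → GoodType t₂ →
      (capVal t₁.1 t₁.2 (Opt t₁ t₂).2 -
          (hPivot t₁ - capVal t₁.1 t₁.2 (Opt t₁ t₂).1) ≤
        capVal t₁.1 t₁.2 (Opt t₁ t₂).1 -
          (hPivot t₂ - capVal t₂.1 t₂.2 (Opt t₁ t₂).2)) ∧
      (capVal t₂.1 t₂.2 (Opt t₁ t₂).1 -
          (hPivot t₂ - capVal t₂.1 t₂.2 (Opt t₁ t₂).2) ≤
        capVal t₂.1 t₂.2 (Opt t₁ t₂).2 -
          (hPivot t₁ - capVal t₁.1 t₁.2 (Opt t₁ t₂).1))) ∧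
    -- (IC) for agent 1
    (∀ t₁ r₂ t₁', GoodType t₁ → GoodType r₂ → GoodType t₁' →
      capVal t₁.1 t₁.2 (Opt t₁' r₂).1 -
          (hPivot r₂ - capVal r₂.1 r₂.2 (Opt t₁' r₂).2) ≤
        capVal t₁.1 t₁.2 (Opt t₁ r₂).1 -
          (hPivot r₂ - capVal r₂.1 r₂.2 (Opt t₁ r₂).2)) ∧
    -- (IC) for agent 2
    (∀ r₁ t₂ t₂', GoodType r₁ → GoodType t₂ → GoodType t₂' →
      capVal t₂.1 t₂.2 (Opt r₁ t₂').2 -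
          (hPivot r₁ - capVal r₁.1 r₁.2 (Opt r₁ t₂').1) ≤
        capVal t₂.1 t₂.2 (Opt r₁ t₂).2 -
          (hPivot r₁ - capVal r₁.1 r₁.2 (Opt r₁ t₂).1)) := by
  
  constructor
  · intro t₁ t₂ h1 h2
    obtain ⟨hd, hopt⟩ := hOpt t₁ t₂ h1 h2
    have k1 := key t₁ t₂ h1 h2 (Opt t₁ t₂).1 (Opt t₁ t₂).2 hd hopt
    have k2 := key t₂ t₁ h2 h1 (Opt t₁ t₂).2 (Opt t₁ t₂).1 hd.symm
      (fun S₂ S₁ hdisj => by have := hopt S₁ S₂ hdisj.symm; linarith)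
    exact ⟨by linarith, by linarith⟩
  constructor
  · intro t₁ r₂ t₁' h1 h2 h1'
    obtain ⟨hd', _⟩ := hOpt t₁' r₂ h1' h2
    obtain ⟨_, hopt⟩ := hOpt t₁ r₂ h1 h2
    have := hopt (Opt t₁' r₂).1 (Opt t₁' r₂).2 hd'
    linarith
  · intro r₁ t₂ t₂' h1 h2 h2'
    obtain ⟨hd', _⟩ := hOpt r₁ t₂' h1 h2'
    obtain ⟨_, hopt⟩ := hOpt r₁ t₂ h1 h2
    have := hopt (Opt r₁ t₂').1 (Opt r₁ t₂').2 hd'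
    linarith
end

section
/- VCG with Clarke-pivot payments is not envy-free under heterogeneous capacities: consider two agents and two goods a, b, where agent 1 has capacity 1 with per-item values w_1 a = 2, w_1 b = 2, and agent 2 has capacity 2 with per-item values w_2 a = 1, w_2 b = 2 (capacitated valuations induced by these values and capacities). The unique welfare-maximizing allocation gives {a} to agent 1 and {b} to agent 2; the Clarke-pivot payments are p_1 = 1 and p_2 = 0; and agent 1 envies agent 2: v_1({b}) − p_2 > v_1({a}) − p_1. -/
section capVal

variable {G : Type*} [DecidableEq G] {w : G → ℝ} {c : ℕ} {S T : Finset G}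

theorem sum_le_capVal (hTS : T ⊆ S) (hT : T.card ≤ c) : ∑ j ∈ T, w j ≤ capVal w c S :=
  Finset.le_sup' (fun T => ∑ j ∈ T, w j)
    (Finset.mem_filter.2 ⟨Finset.mem_powerset.2 hTS, hT⟩)

theorem capVal_le_iff {x : ℝ} :
    capVal w c S ≤ x ↔ ∀ T ⊆ S, T.card ≤ c → ∑ j ∈ T, w j ≤ x :=
  (Finset.sup'_le_iff _ _).trans (by simp)

theorem capVal_eq_sum_of_card_le (hw : ∀ j ∈ S, 0 ≤ w j) (hS : S.card ≤ c) :
    capVal w c S = ∑ j ∈ S, w j :=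
  le_antisymm
    (capVal_le_iff.2 fun _ hTS _ =>
      Finset.sum_le_sum_of_subset_of_nonneg hTS fun j hj _ => hw j hj)
    (sum_le_capVal subset_rfl hS)

theorem capVal_const {m : ℝ} (hm : 0 ≤ m) (c : ℕ) (S : Finset G) :
    capVal (fun _ => m) c S = (min c S.card : ℕ) * m := by
  apply le_antisymm
  · refine capVal_le_iff.2 fun T hTS hT => ?_
    rw [Finset.sum_const, nsmul_eq_mul]
    gcongr
    exact le_min hT (Finset.card_le_card hTS)
  · obtain ⟨T, hTS, hT⟩ := Finset.exists_subset_card_eq (min_le_right c S.card)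
    calc ((min c S.card : ℕ) : ℝ) * m = ∑ _ ∈ T, m := by simp [hT]
      _ ≤ capVal (fun _ => m) c S := sum_le_capVal hTS (hT ▸ min_le_left _ _)

end capVal

theorem Finset.fin_two_cases (S : Finset (Fin 2)) :
    S = ∅ ∨ S = {0} ∨ S = {1} ∨ S = univ := by
  revert S
  decide

theorem welfare_le_three_of_ne {w : Fin 2 → ℝ} (h0 : w 0 = 1) (h1 : w 1 = 2)
    {S₁ S₂ : Finset (Fin 2)} (hd : Disjoint S₁ S₂) (hne : (S₁, S₂) ≠ ({0}, {1})) :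
    ((min 1 S₁.card : ℕ) : ℝ) * 2 + ∑ j ∈ S₂, w j ≤ 3 := by
  rcases S₁.fin_two_cases with rfl | rfl | rfl | rfl <;>
    rcases S₂.fin_two_cases with rfl | rfl | rfl | rfl <;>
    simp_all [Fin.sum_univ_two] <;> norm_num

/-- VCG with Clarke-pivot payments is not envy-free under heterogeneous
capacities: with goods `a = 0`, `b = 1`, agent 1 having capacity 1 and values
`(2, 2)`, agent 2 having capacity 2 and values `(1, 2)`, the unique
welfare-maximizing allocation gives `{a}` to agent 1 and `{b}` to agent 2,
the Clarke-pivot payments are `p₁ = 1` and `p₂ = 0`, and agent 1 envies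
agent 2. -/
theorem clarke_pivot_not_EF_example (w₁ w₂ : Fin 2 → ℝ)
    (hw₁ : w₁ = fun _ => 2)
    (hw₂a : w₂ 0 = 1) (hw₂b : w₂ 1 = 2)
    (p₁ p₂ : ℝ)
    -- Clarke-pivot payments: the best the other agent could get alone, minus
    -- the other agent's welfare at the chosen allocation
    (hp₁ : p₁ = capVal w₂ 2 Finset.univ - capVal w₂ 2 {1})
    (hp₂ : p₂ = capVal w₁ 1 Finset.univ - capVal w₁ 1 {0}) :
    -- the allocation ({a}, {b}) is welfare-maximizing
    (∀ S₁ S₂ : Finset (Fin 2), Disjoint S₁ S₂ →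
      capVal w₁ 1 S₁ + capVal w₂ 2 S₂ ≤ capVal w₁ 1 {0} + capVal w₂ 2 {1}) ∧
    -- and it is the unique welfare-maximizing allocation
    (∀ S₁ S₂ : Finset (Fin 2), Disjoint S₁ S₂ →
      capVal w₁ 1 S₁ + capVal w₂ 2 S₂ = capVal w₁ 1 {0} + capVal w₂ 2 {1} →
      S₁ = {0} ∧ S₂ = {1}) ∧
    p₁ = 1 ∧ p₂ = 0 ∧
    -- agent 1 envies agent 2
    capVal w₁ 1 {0} - p₁ < capVal w₁ 1 {1} - p₂ := by
  subst hw₁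
  have hv₁ (S : Finset (Fin 2)) :
      capVal (fun _ : Fin 2 => (2 : ℝ)) 1 S = (min 1 S.card : ℕ) * 2 :=
    capVal_const zero_le_two 1 S
  have hv₂ (S : Finset (Fin 2)) : capVal w₂ 2 S = ∑ j ∈ S, w₂ j := by
    refine capVal_eq_sum_of_card_le (fun j _ => ?_) (S.card_le_univ.trans (by simp))
    fin_cases j <;> simp [hw₂a, hw₂b]
  have hopt : capVal (fun _ : Fin 2 => (2 : ℝ)) 1 {0} + capVal w₂ 2 {1} = 4 := by
    rw [hv₁, hv₂]; norm_num [hw₂b]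
  have hother {S₁ S₂ : Finset (Fin 2)} (hd : Disjoint S₁ S₂) (hne : (S₁, S₂) ≠ ({0}, {1})) :
      capVal (fun _ : Fin 2 => (2 : ℝ)) 1 S₁ + capVal w₂ 2 S₂ ≤ 3 := by
    rw [hv₁, hv₂]; exact welfare_le_three_of_ne hw₂a hw₂b hd hne
  have hp₁' : p₁ = 1 := by rw [hp₁, hv₂, hv₂]; norm_num [Fin.sum_univ_two, hw₂a, hw₂b]
  have hp₂' : p₂ = 0 := by rw [hp₂, hv₁, hv₁]; simp
  refine ⟨fun S₁ S₂ hd => ?_, fun S₁ S₂ hd heq => ?_, hp₁', hp₂', ?_⟩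
  · by_cases hne : (S₁, S₂) = ({0}, {1})
    · simp_all
    · linarith [hother hd hne]
  · by_contra hne
    have := hother hd (by simpa using hne)
    linarith
  · rw [hp₁', hp₂', hv₁, hv₁]; norm_num
end
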